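/- arXiv:1311.2704 — 2 statements merged into one kernel-verified Lean document; each statement's English description precedes it below -/
import Mathlib

section
/- In the inductive renormalization step, suppose ⟦S_n,S_n⟧ = O(ħ^{n+1}), ⟦S,Γ_{n,div}^{(n+1)}⟧ = (1/2)⟦S_n,S_n⟧ + O(ħ^{n+2}), and S_n = S + O(ħ). Define S_{n+1} = S_n − Γ_{n,div}^{(n+1)} with Γ_{n,div}^{(n+1)} = O(ħ^{n+1}). Then ⟦S_{n+1},S_{n+1}⟧ = O(ħ^{n+2}). -/
/-!
Expanding the square and using symmetry,
`⟦S_n - Γ, S_n - Γ⟧ = (⟦S_n,S_n⟧ - 2⟦S,Γ⟧) - 2⟦S_n - S, Γ⟧ + ⟦Γ,Γ⟧`.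
The first term is `-2(⟦S,Γ⟧ - ½⟦S_n,S_n⟧) = O(ħ^{n+2})` by hypothesis, and the other two are
`O(ħ^{1+(n+1)})` and `O(ħ^{2(n+1)})` because the bracket adds orders.
-/

section SymmetricBilinear

variable {R M : Type*} [CommRing R] [AddCommGroup M] [Module R M]

theorem LinearMap.apply_sub_sub_self_of_symm (br : M →ₗ[R] M →ₗ[R] M)
    (symm : ∀ X Y : M, br X Y = br Y X) (A B G : M) :
    br (A - G) (A - G) = br A A - 2 • br B G - 2 • br (A - B) G + br G G := by
  simp only [map_sub, LinearMap.sub_apply, symm G A]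
  abel

theorem LinearMap.apply_mem_of_le_add (br : M →ₗ[R] M →ₗ[R] M) (O : ℕ → Submodule R M)
    (Oanti : ∀ k l : ℕ, k ≤ l → O l ≤ O k)
    (Obr : ∀ (k l : ℕ) (X Y : M), X ∈ O k → Y ∈ O l → br X Y ∈ O (k + l))
    {k l m : ℕ} {X Y : M} (hX : X ∈ O k) (hY : Y ∈ O l) (hm : m ≤ k + l) :
    br X Y ∈ O m :=
  Oanti m (k + l) hm (Obr k l X Y hX hY)

end SymmetricBilinear

theorem stmt4_general {M : Type*} [AddCommGroup M] [Module ℚ M]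
    (br : M →ₗ[ℚ] M →ₗ[ℚ] M)
    (symm : ∀ X Y : M, br X Y = br Y X)
    (O : ℕ → Submodule ℚ M)
    (Oanti : ∀ k l : ℕ, k ≤ l → O l ≤ O k)
    (Obr : ∀ (k l : ℕ) (X Y : M), X ∈ O k → Y ∈ O l → br X Y ∈ O (k + l))
    (n : ℕ) (S Sn Γdiv : M)
    (h2 : br S Γdiv - (1 / 2 : ℚ) • br Sn Sn ∈ O (n + 2))
    (h3 : Sn - S ∈ O 1)
    (h4 : Γdiv ∈ O (n + 1)) :
    br (Sn - Γdiv) (Sn - Γdiv) ∈ O (n + 2) := by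
  rw [br.apply_sub_sub_self_of_symm symm Sn S Γdiv]
  have hlead : br Sn Sn - 2 • br S Γdiv ∈ O (n + 2) := by
    have e : br Sn Sn - 2 • br S Γdiv = (-2 : ℚ) • (br S Γdiv - (1 / 2 : ℚ) • br Sn Sn) := by
      module
    rw [e]
    exact Submodule.smul_mem _ _ h2
  have hmixed : br (Sn - S) Γdiv ∈ O (n + 2) := br.apply_mem_of_le_add O Oanti Obr h3 h4 (by omega)
  have hsquare : br Γdiv Γdiv ∈ O (n + 2) := br.apply_mem_of_le_add O Oanti Obr h4 h4 (by omega)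
  exact add_mem (sub_mem hlead (nsmul_mem hmixed 2)) hsquare

/-- inductive renormalization step.  In a ring of formal power
series in `ħ` (modeled by a filtration `O k` of "order at least `ħ^k`"
submodules), if `⟦S_n,S_n⟧ = O(ħ^{n+1})`,
`⟦S,Γ_div⟧ = (1/2)⟦S_n,S_n⟧ + O(ħ^{n+2})`, `S_n = S + O(ħ)` and
`Γ_div = O(ħ^{n+1})`, then `S_{n+1} := S_n − Γ_div` satisfies
`⟦S_{n+1},S_{n+1}⟧ = O(ħ^{n+2})`. -/
theorem stmt4 {M : Type*} [AddCommGroup M] [Module ℚ M]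
    (br : M →ₗ[ℚ] M →ₗ[ℚ] M)
    (symm : ∀ X Y : M, br X Y = br Y X)
    (O : ℕ → Submodule ℚ M)
    (Oanti : ∀ k l : ℕ, k ≤ l → O l ≤ O k)
    (Obr : ∀ (k l : ℕ) (X Y : M), X ∈ O k → Y ∈ O l → br X Y ∈ O (k + l))
    (n : ℕ) (S Sn Γdiv : M)
    (h1 : br Sn Sn ∈ O (n + 1))
    (h2 : br S Γdiv - (1 / 2 : ℚ) • br Sn Sn ∈ O (n + 2))
    (h3 : Sn - S ∈ O 1)
    (h4 : Γdiv ∈ O (n + 1)) :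
    br (Sn - Γdiv) (Sn - Γdiv) ∈ O (n + 2) :=
  stmt4_general br symm O Oanti Obr n S Sn Γdiv h2 h3 h4
end

section
/- Let S = Ŝ(Φ,φ̲,K) + S̄ where Ŝ is independent of the background sources K̲ and background ghosts C̲, and S̄ is linear in the quantum fields Φ, vanishes at C̲ = 0, and has Φ-independent δ_l S̄/δK̲_α. Then the effective action satisfies Γ(Φ,Φ̲,K,K̲) = Γ̂(Φ,φ̲,K) + S̄(Φ,Φ̲,K,K̲); i.e. S̄ receives no radiative corrections. -/
open MeasureTheory

noncomputable section

/-- Partition function of the full action `S = Ŝ + S̄`. -/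
def Zfull {ι p g κ : Type} [Fintype ι] [DecidableEq ι]
    (Shat : (ι → ℝ) → (p → ℝ) → (ι → ℝ) → ℝ)
    (Sbar : (ι → ℝ) → (p → ℝ) → (g → ℝ) → (ι → ℝ) → (κ → ℝ) → ℝ)
    (J : ι → ℝ) (φb : p → ℝ) (Cb : g → ℝ) (K : ι → ℝ) (Kb : κ → ℝ) : ℝ :=
  ∫ φ : ι → ℝ,
    Real.exp (-(Shat φ φb K + Sbar φ φb Cb K Kb) + ∑ α, φ α * J α)

def Wfull {ι p g κ : Type} [Fintype ι] [DecidableEq ι]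
    (Shat : (ι → ℝ) → (p → ℝ) → (ι → ℝ) → ℝ)
    (Sbar : (ι → ℝ) → (p → ℝ) → (g → ℝ) → (ι → ℝ) → (κ → ℝ) → ℝ)
    (J : ι → ℝ) (φb : p → ℝ) (Cb : g → ℝ) (K : ι → ℝ) (Kb : κ → ℝ) : ℝ :=
  Real.log (Zfull Shat Sbar J φb Cb K Kb)

/-- The effective action of the full theory. -/
def Gamfull {ι p g κ : Type} [Fintype ι] [DecidableEq ι]
    (Shat : (ι → ℝ) → (p → ℝ) → (ι → ℝ) → ℝ)
    (Sbar : (ι → ℝ) → (p → ℝ) → (g → ℝ) → (ι → ℝ) → (κ → ℝ) → ℝ)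
    (Jf : (ι → ℝ) → (p → ℝ) → (g → ℝ) → (ι → ℝ) → (κ → ℝ) → (ι → ℝ))
    (Φ : ι → ℝ) (φb : p → ℝ) (Cb : g → ℝ) (K : ι → ℝ) (Kb : κ → ℝ) : ℝ :=
  -Wfull Shat Sbar (Jf Φ φb Cb K Kb) φb Cb K Kb
    + ∑ α, Φ α * Jf Φ φb Cb K Kb α

/-- Partition function of the quantum action `Ŝ` alone. -/
def Zhat {ι p : Type} [Fintype ι] [DecidableEq ι]
    (Shat : (ι → ℝ) → (p → ℝ) → (ι → ℝ) → ℝ)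
    (J : ι → ℝ) (φb : p → ℝ) (K : ι → ℝ) : ℝ :=
  ∫ φ : ι → ℝ, Real.exp (-Shat φ φb K + ∑ α, φ α * J α)

def What {ι p : Type} [Fintype ι] [DecidableEq ι]
    (Shat : (ι → ℝ) → (p → ℝ) → (ι → ℝ) → ℝ)
    (J : ι → ℝ) (φb : p → ℝ) (K : ι → ℝ) : ℝ :=
  Real.log (Zhat Shat J φb K)

/-- The effective action `Γ̂` of the quantum action alone. -/
def Gamhat {ι p : Type} [Fintype ι] [DecidableEq ι]
    (Shat : (ι → ℝ) → (p → ℝ) → (ι → ℝ) → ℝ)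
    (Jfh : (ι → ℝ) → (p → ℝ) → (ι → ℝ) → (ι → ℝ))
    (Φ : ι → ℝ) (φb : p → ℝ) (K : ι → ℝ) : ℝ :=
  -What Shat (Jfh Φ φb K) φb K + ∑ α, Φ α * Jfh Φ φb K α


/-! The `Φ`-linear part of `S̄` only shifts the source: `Z(J) = exp (-S̄(0)) · Ẑ(J - λ)`, hence
`W(J) = -S̄(0) + Ŵ(J - λ)`, and the Legendre transform turns the shift back into `Φ ⬝ᵥ λ`.
What remains is that the Legendre transform does not depend on which source realises the
field `Φ`: `Ŵ` is convex by Hölder's inequality, and a differentiable convex function takes the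
same value of `Ŵ(J) - Φ ⬝ᵥ J` at every point where its gradient is `Φ`. -/

open Matrix Finset

section ConvexLegendre

variable {E : Type*} [NormedAddCommGroup E] [NormedSpace ℝ E] {s : Set E} {f : E → ℝ}
  {f' : E →L[ℝ] ℝ} {x y : E}

theorem ConvexOn.add_fderiv_sub_le (hf : ConvexOn ℝ s f) (hx : x ∈ s) (hy : y ∈ s)
    (hf' : HasFDerivAt f f' x) : f x + f' (y - x) ≤ f y := by
  set l : ℝ →ᵃ[ℝ] E := AffineMap.lineMap x y
  have hf'₀ : HasFDerivAt f f' (l 0) := by simpa [l] using hf'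
  have hl : HasDerivAt (f ∘ l) (f' (y - x)) 0 := hf'₀.comp_hasDerivAt 0 AffineMap.hasDerivAt_lineMap
  have hslope := (hf.comp_affineMap l).le_slope_of_hasDerivAt (x := 0) (y := 1)
    (by simpa [l] using hx) (by simpa [l] using hy) zero_lt_one hl
  simp only [slope_def_field, Function.comp_apply, l, AffineMap.lineMap_apply_zero,
    AffineMap.lineMap_apply_one, sub_zero, div_one] at hslope
  linarith

theorem ConvexOn.sub_eq_sub_of_hasFDerivAt (hf : ConvexOn ℝ s f) (hx : x ∈ s) (hy : y ∈ s)
    (hfx : HasFDerivAt f f' x) (hfy : HasFDerivAt f f' y) : f x - f' x = f y - f' y := by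
  have hxy := hf.add_fderiv_sub_le hx hy hfx
  have hyx := hf.add_fderiv_sub_le hy hx hfy
  rw [map_sub] at hxy hyx
  linarith

end ConvexLegendre

section PartitionFunction

variable {ι : Type*} [Fintype ι]

def dotProductL : (ι → ℝ) →L[ℝ] (ι → ℝ) →L[ℝ] ℝ :=
  LinearMap.toContinuousLinearMap
    ((LinearMap.toContinuousLinearMap : ((ι → ℝ) →ₗ[ℝ] ℝ) ≃ₗ[ℝ] _).toLinearMap ∘ₗ
      dotProductBilin ℝ ℝ)

@[simp]
theorem dotProductL_apply (φ J : ι → ℝ) : dotProductL φ J = φ ⬝ᵥ J := rfl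

theorem norm_dotProductL_le (φ : ι → ℝ) : ‖dotProductL φ‖ ≤ ∑ α, |φ α| := by
  refine ContinuousLinearMap.opNorm_le_bound _ (by positivity) fun J => ?_
  calc ‖φ ⬝ᵥ J‖ ≤ ∑ α, |φ α * J α| := abs_sum_le_sum_abs _ _
    _ ≤ ∑ α, |φ α| * ‖J‖ := sum_le_sum fun α _ => by
        rw [abs_mul]; gcongr; exact norm_le_pi_norm J α
    _ = (∑ α, |φ α|) * ‖J‖ := (sum_mul ..).symm

theorem eq_dotProductL_of_apply_single [DecidableEq ι] {D : (ι → ℝ) →L[ℝ] ℝ} {Φ : ι → ℝ}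
    (hD : ∀ α, D (Pi.single α 1) = Φ α) : D = dotProductL Φ :=
  ContinuousLinearMap.coe_injective <| (Pi.basisFun ℝ ι).ext fun α => by simp [hD]

theorem Real.exp_mul_sum_abs_le [DecidableEq ι] {c : ℝ} (hc : 0 ≤ c) (φ : ι → ℝ) :
    Real.exp (c * ∑ α, |φ α|) ≤
      ∑ σ : ι → Bool, Real.exp (φ ⬝ᵥ fun α => if σ α then c else -c) := by
  calc Real.exp (c * ∑ α, |φ α|) = ∏ α, Real.exp |c * φ α| := by
        simp only [mul_sum, Real.exp_sum, abs_mul, abs_of_nonneg hc]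
    _ ≤ ∏ α, ∑ b : Bool, Real.exp (φ α * if b then c else -c) :=
        prod_le_prod (fun _ _ => (Real.exp_pos _).le) fun α _ => by
          simpa [Fintype.sum_bool, mul_comm, neg_mul] using Real.exp_abs_le (c * φ α)
    _ = ∑ σ : ι → Bool, Real.exp (φ ⬝ᵥ fun α => if σ α then c else -c) := by
        simp only [Fintype.prod_sum, dotProduct, Real.exp_sum]

def partitionFunction (f : (ι → ℝ) → ℝ) (J : ι → ℝ) : ℝ :=
  ∫ φ, Real.exp (f φ + φ ⬝ᵥ J)

variable {f : (ι → ℝ) → ℝ}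

theorem norm_exp_smul_dotProductL_le [DecidableEq ι] {J₀ J φ : ι → ℝ} (hJ : ‖J - J₀‖ ≤ 1) :
    ‖Real.exp (f φ + φ ⬝ᵥ J) • dotProductL φ‖ ≤
      ∑ σ : ι → Bool, Real.exp (f φ + φ ⬝ᵥ (J₀ + fun α => if σ α then 2 else -2)) := by
  set T := ∑ α, |φ α|
  have hT : 0 ≤ T := by positivity
  have hshift : φ ⬝ᵥ J ≤ φ ⬝ᵥ J₀ + T := by
    have h := (le_abs_self _).trans ((dotProductL φ).le_opNorm (J - J₀))
    have : ‖dotProductL φ‖ * ‖J - J₀‖ ≤ T :=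
      (mul_le_mul (norm_dotProductL_le φ) hJ (norm_nonneg _) hT).trans (mul_one T).le
    simp only [map_sub, dotProductL_apply] at h
    linarith
  calc ‖Real.exp (f φ + φ ⬝ᵥ J) • dotProductL φ‖
      = Real.exp (f φ + φ ⬝ᵥ J) * ‖dotProductL φ‖ := by
        rw [norm_smul, Real.norm_of_nonneg (Real.exp_pos _).le]
    _ ≤ Real.exp (f φ + φ ⬝ᵥ J₀ + T) * Real.exp T := by
        refine mul_le_mul (Real.exp_le_exp.mpr (by linarith)) ?_ (norm_nonneg _) (by positivity)
        exact (norm_dotProductL_le φ).trans ((Real.add_one_le_exp T).trans' (by linarith))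
    _ = Real.exp (f φ + φ ⬝ᵥ J₀) * Real.exp (2 * T) := by
        rw [← Real.exp_add, ← Real.exp_add]; ring_nf
    _ ≤ Real.exp (f φ + φ ⬝ᵥ J₀) *
          ∑ σ : ι → Bool, Real.exp (φ ⬝ᵥ fun α => if σ α then 2 else -2) := by
        gcongr; exact Real.exp_mul_sum_abs_le zero_le_two φ
    _ = _ := by simp only [mul_sum, ← Real.exp_add, dotProduct_add, add_assoc]

variable (hf : ∀ J, Integrable fun φ : ι → ℝ => Real.exp (f φ + φ ⬝ᵥ J))
include hf

theorem hasFDerivAt_partitionFunction [DecidableEq ι] (J₀ : ι → ℝ) :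
    HasFDerivAt (partitionFunction f)
      (∫ φ, Real.exp (f φ + φ ⬝ᵥ J₀) • dotProductL φ) J₀ :=
  hasFDerivAt_integral_of_dominated_of_fderiv_le (Metric.ball_mem_nhds J₀ one_pos)
    (Filter.Eventually.of_forall fun J => (hf J).aestronglyMeasurable) (hf J₀)
    ((hf J₀).aestronglyMeasurable.smul dotProductL.continuous.aestronglyMeasurable)
    (ae_of_all _ fun _ _ hJ =>
      norm_exp_smul_dotProductL_le (mem_ball_iff_norm.mp hJ).le)
    (integrable_finsetSum _ fun _ _ => hf _)
    (ae_of_all _ fun φ _ _ =>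
      ((dotProductL φ).hasFDerivAt.const_add (f φ)).exp)

theorem partitionFunction_pos (J : ι → ℝ) : 0 < partitionFunction f J :=
  integral_exp_pos (hf J)

theorem partitionFunction_add_smul_le {a b : ℝ} (ha : 0 ≤ a) (hb : 0 ≤ b) (hab : a + b = 1)
    (J₁ J₂ : ι → ℝ) :
    partitionFunction f (a • J₁ + b • J₂) ≤
      partitionFunction f J₁ ^ a * partitionFunction f J₂ ^ b := by
  have hZ : ∀ J, ENNReal.ofReal (partitionFunction f J) =
      ∫⁻ φ, ENNReal.ofReal (Real.exp (f φ + φ ⬝ᵥ J)) := fun J =>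
    ofReal_integral_eq_lintegral_ofReal (hf J)
      (ae_of_all _ fun _ => (Real.exp_pos _).le)
  have hmeas : ∀ J, AEMeasurable fun φ => ENNReal.ofReal (Real.exp (f φ + φ ⬝ᵥ J)) := fun J =>
    (hf J).aestronglyMeasurable.aemeasurable.ennreal_ofReal
  have hpoint : ∀ φ : ι → ℝ, ENNReal.ofReal (Real.exp (f φ + φ ⬝ᵥ (a • J₁ + b • J₂))) =
      ENNReal.ofReal (Real.exp (f φ + φ ⬝ᵥ J₁)) ^ a *
        ENNReal.ofReal (Real.exp (f φ + φ ⬝ᵥ J₂)) ^ b := by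
    intro φ
    have hexp : f φ + φ ⬝ᵥ (a • J₁ + b • J₂) = (f φ + φ ⬝ᵥ J₁) * a + (f φ + φ ⬝ᵥ J₂) * b := by
      rw [dotProduct_add, dotProduct_smul, dotProduct_smul, smul_eq_mul, smul_eq_mul]
      linear_combination f φ * hab.symm
    rw [hexp, Real.exp_add, Real.exp_mul, Real.exp_mul,
      ENNReal.ofReal_mul (by positivity), ENNReal.ofReal_rpow_of_pos (Real.exp_pos _),
      ENNReal.ofReal_rpow_of_pos (Real.exp_pos _)]
  have h₁ := (partitionFunction_pos hf J₁).le
  have h₂ := (partitionFunction_pos hf J₂).le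
  rw [← ENNReal.ofReal_le_ofReal_iff (by positivity), ENNReal.ofReal_mul (by positivity),
    ← ENNReal.ofReal_rpow_of_nonneg h₁ ha, ← ENNReal.ofReal_rpow_of_nonneg h₂ hb, hZ, hZ, hZ,
    lintegral_congr fun φ => hpoint φ]
  exact ENNReal.lintegral_mul_norm_pow_le (hmeas J₁) (hmeas J₂) ha hb hab

theorem convexOn_log_partitionFunction :
    ConvexOn ℝ Set.univ fun J => Real.log (partitionFunction f J) := by
  refine ⟨convex_univ, fun J₁ _ J₂ _ a b ha hb hab => ?_⟩
  have h₁ := partitionFunction_pos hf J₁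
  have h₂ := partitionFunction_pos hf J₂
  calc Real.log (partitionFunction f (a • J₁ + b • J₂))
      ≤ Real.log (partitionFunction f J₁ ^ a * partitionFunction f J₂ ^ b) :=
        Real.log_le_log (partitionFunction_pos hf _)
          (partitionFunction_add_smul_le hf ha hb hab J₁ J₂)
    _ = a • Real.log (partitionFunction f J₁) + b • Real.log (partitionFunction f J₂) := by
        rw [Real.log_mul (by positivity) (by positivity), Real.log_rpow h₁, Real.log_rpow h₂,
          smul_eq_mul, smul_eq_mul]

end PartitionFunction

section Decoupling

variable {ι p g κ : Type} [Fintype ι] [DecidableEq ι]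
  {Shat : (ι → ℝ) → (p → ℝ) → (ι → ℝ) → ℝ}
  {Sbar : (ι → ℝ) → (p → ℝ) → (g → ℝ) → (ι → ℝ) → (κ → ℝ) → ℝ}
  {lam : ι → (p → ℝ) → (g → ℝ) → (ι → ℝ) → ℝ}

theorem Zfull_eq_exp_mul_Zhat
    (hlin : ∀ (Φ : ι → ℝ) (φb : p → ℝ) (Cb : g → ℝ) (K : ι → ℝ) (Kb : κ → ℝ),
      Sbar Φ φb Cb K Kb = Sbar 0 φb Cb K Kb + ∑ α, Φ α * lam α φb Cb K)
    (J : ι → ℝ) (φb : p → ℝ) (Cb : g → ℝ) (K : ι → ℝ) (Kb : κ → ℝ) :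
    Zfull Shat Sbar J φb Cb K Kb =
      Real.exp (-Sbar 0 φb Cb K Kb) * Zhat Shat (J - fun α => lam α φb Cb K) φb K := by
  rw [Zfull, Zhat, ← integral_const_mul]
  congr 1 with φ
  rw [← Real.exp_add, hlin]
  simp only [Pi.sub_apply, mul_sub, sum_sub_distrib]
  ring_nf

theorem Wfull_eq_What_sub
    (hlin : ∀ (Φ : ι → ℝ) (φb : p → ℝ) (Cb : g → ℝ) (K : ι → ℝ) (Kb : κ → ℝ),
      Sbar Φ φb Cb K Kb = Sbar 0 φb Cb K Kb + ∑ α, Φ α * lam α φb Cb K)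
    (hZh : ∀ (J : ι → ℝ) (φb : p → ℝ) (K : ι → ℝ), 0 < Zhat Shat J φb K)
    (J : ι → ℝ) (φb : p → ℝ) (Cb : g → ℝ) (K : ι → ℝ) (Kb : κ → ℝ) :
    Wfull Shat Sbar J φb Cb K Kb =
      -Sbar 0 φb Cb K Kb + What Shat (J - fun α => lam α φb Cb K) φb K := by
  rw [Wfull, What, Zfull_eq_exp_mul_Zhat hlin,
    Real.log_mul (Real.exp_ne_zero _) (hZh _ φb K).ne', Real.log_exp]

end Decoupling

theorem stmt13_general {ι p g κ : Type} [Fintype ι] [DecidableEq ι]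
    (Shat : (ι → ℝ) → (p → ℝ) → (ι → ℝ) → ℝ)
    (Sbar : (ι → ℝ) → (p → ℝ) → (g → ℝ) → (ι → ℝ) → (κ → ℝ) → ℝ)
    -- S̄ is linear (affine) in the quantum fields Φ, with Φ-linear
    -- coefficient `lam` independent of the background sources K̲
    (lam : ι → (p → ℝ) → (g → ℝ) → (ι → ℝ) → ℝ)
    (hlin : ∀ (Φ : ι → ℝ) (φb : p → ℝ) (Cb : g → ℝ) (K : ι → ℝ) (Kb : κ → ℝ),
      Sbar Φ φb Cb K Kb = Sbar 0 φb Cb K Kb + ∑ α, Φ α * lam α φb Cb K)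
    (hZh : ∀ (J : ι → ℝ) (φb : p → ℝ) (K : ι → ℝ), 0 < Zhat Shat J φb K)
    (Jf : (ι → ℝ) → (p → ℝ) → (g → ℝ) → (ι → ℝ) → (κ → ℝ) → (ι → ℝ))
    (hJ : ∀ (Φ : ι → ℝ) (φb : p → ℝ) (Cb : g → ℝ) (K : ι → ℝ) (Kb : κ → ℝ)
        (α : ι),
      fderiv ℝ (fun j => Wfull Shat Sbar j φb Cb K Kb) (Jf Φ φb Cb K Kb)
        (Pi.single α 1) = Φ α)
    (Jfh : (ι → ℝ) → (p → ℝ) → (ι → ℝ) → (ι → ℝ))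
    (hJh : ∀ (Φ : ι → ℝ) (φb : p → ℝ) (K : ι → ℝ) (α : ι),
      fderiv ℝ (fun j => What Shat j φb K) (Jfh Φ φb K) (Pi.single α 1) = Φ α) :
    ∀ (Φ : ι → ℝ) (φb : p → ℝ) (Cb : g → ℝ) (K : ι → ℝ) (Kb : κ → ℝ),
      Gamfull Shat Sbar Jf Φ φb Cb K Kb
        = Gamhat Shat Jfh Φ φb K + Sbar Φ φb Cb K Kb := by
  intro Φ φb Cb K Kb
  set lamv : ι → ℝ := fun α => lam α φb Cb K
  have hW : (fun j => Wfull Shat Sbar j φb Cb K Kb) =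
      fun j => -Sbar 0 φb Cb K Kb + What Shat (j - lamv) φb K :=
    funext fun j => Wfull_eq_What_sub hlin hZh j φb Cb K Kb
  have hint : ∀ J, Integrable fun φ : ι → ℝ => Real.exp (-Shat φ φb K + φ ⬝ᵥ J) :=
    fun J => .of_integral_ne_zero (hZh J φb K).ne'
  have hconv : ConvexOn ℝ Set.univ fun j => What Shat j φb K :=
    convexOn_log_partitionFunction hint
  have hdiff : ∀ J, HasFDerivAt (fun j => What Shat j φb K)
      (fderiv ℝ (fun j => What Shat j φb K) J) J := fun J =>
    ((hasFDerivAt_partitionFunction hint J).differentiableAt.log (hZh J φb K).ne').hasFDerivAt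
  have hx : fderiv ℝ (fun j => What Shat j φb K) (Jf Φ φb Cb K Kb - lamv) = dotProductL Φ :=
    eq_dotProductL_of_apply_single fun α => by
      simpa only [hW, fderiv_const_add, fderiv_comp_sub (f := fun j => What Shat j φb K)]
        using hJ Φ φb Cb K Kb α
  have hy : fderiv ℝ (fun j => What Shat j φb K) (Jfh Φ φb K) = dotProductL Φ :=
    eq_dotProductL_of_apply_single (hJh Φ φb K)
  have hlegendre := hconv.sub_eq_sub_of_hasFDerivAt trivial trivial
    (hx ▸ hdiff (Jf Φ φb Cb K Kb - lamv)) (hy ▸ hdiff (Jfh Φ φb K))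
  rw [Gamfull, Gamhat, Wfull_eq_What_sub hlin hZh, hlin Φ]
  simp only [dotProductL_apply, dotProduct, Pi.sub_apply, mul_sub, sum_sub_distrib] at hlegendre
  linarith

/-- if `S = Ŝ + S̄` with `Ŝ` independent of the background
sources `K̲` and background ghosts `C̲`, and `S̄` linear in the quantum
fields `Φ`, vanishing at `C̲ = 0`, with `Φ`-independent `δ_l S̄/δK̲`, then
`Γ(Φ,Φ̲,K,K̲) = Γ̂(Φ,φ̲,K) + S̄(Φ,Φ̲,K,K̲)`:
the background action receives no radiative corrections. -/
theorem stmt13 {ι p g κ : Type} [Fintype ι] [DecidableEq ι]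
    (Shat : (ι → ℝ) → (p → ℝ) → (ι → ℝ) → ℝ)
    (Sbar : (ι → ℝ) → (p → ℝ) → (g → ℝ) → (ι → ℝ) → (κ → ℝ) → ℝ)
    -- S̄ is linear (affine) in the quantum fields Φ, with Φ-linear
    -- coefficient `lam` independent of the background sources K̲
    (lam : ι → (p → ℝ) → (g → ℝ) → (ι → ℝ) → ℝ)
    (hlin : ∀ (Φ : ι → ℝ) (φb : p → ℝ) (Cb : g → ℝ) (K : ι → ℝ) (Kb : κ → ℝ),
      Sbar Φ φb Cb K Kb = Sbar 0 φb Cb K Kb + ∑ α, Φ α * lam α φb Cb K)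
    -- S̄ vanishes when the background ghosts are switched off
    (hvan : ∀ (Φ : ι → ℝ) (φb : p → ℝ) (K : ι → ℝ) (Kb : κ → ℝ),
      Sbar Φ φb 0 K Kb = 0)
    (hZf : ∀ (J : ι → ℝ) (φb : p → ℝ) (Cb : g → ℝ) (K : ι → ℝ) (Kb : κ → ℝ),
      0 < Zfull Shat Sbar J φb Cb K Kb)
    (hZh : ∀ (J : ι → ℝ) (φb : p → ℝ) (K : ι → ℝ), 0 < Zhat Shat J φb K)
    (Jf : (ι → ℝ) → (p → ℝ) → (g → ℝ) → (ι → ℝ) → (κ → ℝ) → (ι → ℝ))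
    (hJ : ∀ (Φ : ι → ℝ) (φb : p → ℝ) (Cb : g → ℝ) (K : ι → ℝ) (Kb : κ → ℝ)
        (α : ι),
      fderiv ℝ (fun j => Wfull Shat Sbar j φb Cb K Kb) (Jf Φ φb Cb K Kb)
        (Pi.single α 1) = Φ α)
    (Jfh : (ι → ℝ) → (p → ℝ) → (ι → ℝ) → (ι → ℝ))
    (hJh : ∀ (Φ : ι → ℝ) (φb : p → ℝ) (K : ι → ℝ) (α : ι),
      fderiv ℝ (fun j => What Shat j φb K) (Jfh Φ φb K) (Pi.single α 1) = Φ α) :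
    ∀ (Φ : ι → ℝ) (φb : p → ℝ) (Cb : g → ℝ) (K : ι → ℝ) (Kb : κ → ℝ),
      Gamfull Shat Sbar Jf Φ φb Cb K Kb
        = Gamhat Shat Jfh Φ φb K + Sbar Φ φb Cb K Kb :=
  stmt13_general Shat Sbar lam hlin hZh Jf hJ Jfh hJh
end
end
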